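/- arXiv:math/0608314 — 3 statements merged into one kernel-verified Lean document; each statement's English description precedes it below -/
import Mathlib

section
/- The (1,1)-tensor Γ = H∘G satisfies Γ²=Id, LΓ=L, and ΓL=−L; that is, Γ is an almost-product structure which is an L-connection on M. -/
/-!
Writing `X = v X + h X` with `v X = L Y`, the defining relations of `G` and `H` give
`H (G X) = H (-h Y + L X) = -L Y + h X = h X - v X`. Hence `Γ = h - v = 1 - 2 v` is the reflection
attached to the idempotent `v`, so `Γ² = 1`, and `L v = 0`, `v L = L` give `L Γ = L`, `Γ L = -L`.
-/

theorem IsIdempotentElem.one_sub_two_mul_mul_self {R : Type*} [Ring R] {p : R}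
    (hp : IsIdempotentElem p) : (1 - 2 * p) * (1 - 2 * p) = 1 := by
  have hpp : p * p = p := hp
  simp only [two_mul, sub_mul, mul_sub, add_mul, mul_add, one_mul, mul_one, hpp]
  abel

theorem mul_eq_sub_of_range_le_range {R V : Type*} [Ring R] [AddCommGroup V] [Module R V]
    {L v h G H : Module.End R V} (hvh : v + h = 1) (hImv : LinearMap.range v ≤ LinearMap.range L)
    (hG1 : ∀ X : V, G (L X) = -(h X)) (hG2 : ∀ X : V, G (h X) = L X)
    (hH1 : ∀ X : V, H (L X) = h X) (hH2 : ∀ X : V, H (h X) = L X) :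
    H * G = h - v := by
  ext X
  obtain ⟨Y, hY⟩ : v X ∈ LinearMap.range L := hImv (LinearMap.mem_range_self v X)
  have hX : L Y + h X = X := by
    rw [hY, ← LinearMap.add_apply, hvh, Module.End.one_apply]
  calc (H * G) X = H (G (L Y + h X)) := by rw [hX]; rfl
    _ = -(L Y) + h X := by rw [map_add, hG1, hG2, map_add, map_neg, hH1, hH2]
    _ = (h - v) X := by rw [hY, LinearMap.sub_apply, neg_add_eq_sub]

theorem stmt8_general
    {V : Type*} [LieRing V] [LieAlgebra ℝ V]
    (L v h G H : Module.End ℝ V)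
    (hvh : v + h = 1) (hv2 : v * v = v)
    (hImv : LinearMap.range v = LinearMap.range L)
    (hLv : L * v = 0) (hvL : v * L = L)
    (hG1 : ∀ X : V, G (L X) = -(h X)) (hG2 : ∀ X : V, G (h X) = L X)
    (hH1 : ∀ X : V, H (L X) = h X) (hH2 : ∀ X : V, H (h X) = L X) :
    (H * G) * (H * G) = 1 ∧ L * (H * G) = L ∧ (H * G) * L = -L := by
  have hΓ : H * G = 1 - 2 * v := by
    rw [mul_eq_sub_of_range_le_range hvh hImv.le hG1 hG2 hH1 hH2, eq_sub_of_add_eq' hvh, two_mul,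
      sub_sub]
  refine ⟨hΓ ▸ IsIdempotentElem.one_sub_two_mul_mul_self hv2, ?_, ?_⟩
  · rw [hΓ, mul_sub, two_mul, mul_add, hLv, mul_one, add_zero, sub_zero]
  · rw [hΓ, sub_mul, two_mul, add_mul, hvL, one_mul]
    abel

/-- `Γ = H ∘ G` is an almost-product structure which is an `L`-connection: `Γ² = Id`, `LΓ = L`, `ΓL = -L`. -/
theorem stmt8
    {V : Type*} [LieRing V] [LieAlgebra ℝ V] (n : ℕ)
    (L v h G H : Module.End ℝ V)
    (hdim : Module.finrank ℝ V = 2 * n)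
    (hrank : Module.finrank ℝ (LinearMap.range L) = n)
    (hL2 : L * L = 0)
    (hIK : LinearMap.range L = LinearMap.ker L)
    (hvh : v + h = 1) (hv2 : v * v = v) (hh2 : h * h = h)
    (hvhz : v * h = 0) (hhvz : h * v = 0)
    (hImv : LinearMap.range v = LinearMap.range L)
    (hLv : L * v = 0) (hvL : v * L = L) (hLh : L * h = L) (hhL : h * L = 0)
    (hG1 : ∀ X : V, G (L X) = -(h X)) (hG2 : ∀ X : V, G (h X) = L X)
    (hH1 : ∀ X : V, H (L X) = h X) (hH2 : ∀ X : V, H (h X) = L X) :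
    (H * G) * (H * G) = 1 ∧ L * (H * G) = L ∧ (H * G) * L = -L :=
  stmt8_general L v h G H hvh hv2 hImv hLv hvL hG1 hG2 hH1 hH2
end

section
/- For a reducible L-regular linear connection D (DΓ=0) inducing L-connection Γ with associated almost-complex structure F, the following are equivalent: (a) DΓ=0; (b) DF=0; (c) Dv=0 and Dh=0. -/
/-!
All three conditions say that every `D X` commutes with certain endomorphisms, and the
endomorphisms commuting with all `D X` form a subalgebra (a centralizer) containing `L`.
Since `Γ = h - v = FL - LF`, `v = LF`, `h = FL` and `v, h` are polynomials in `Γ`, everything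
follows from closure of the centralizer, except `DΓ = 0 → DF = 0`. For that, `T = [D X, F]`
kills `L` and `h`, hence kills `v = LF` too, and so `T = T (v + h) = 0`.
-/

theorem forall_apply_comm_iff_mem_centralizer {R M N : Type*} [CommRing R]
    [AddCommGroup M] [Module R M] [AddCommGroup N] [Module R N]
    (D : M →ₗ[R] Module.End R N) (A : Module.End R N) :
    (∀ X Y, D X (A Y) = A (D X Y)) ↔ A ∈ Subalgebra.centralizer R (Set.range D) := by
  simp only [Subalgebra.mem_centralizer_iff, Set.forall_mem_range, LinearMap.ext_iff,
    Module.End.mul_apply]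

theorem Commute.almostComplex_of_commute {A : Type*} [Ring A] {d L F v h : A}
    (hvh : v + h = 1) (hFL : F * L = h) (hFh : F * h = -L) (hLF : L * F = v)
    (hdL : Commute d L) (hdh : Commute d h) : Commute d F := by
  have hT_L : (d * F - F * d) * L = 0 := by
    rw [sub_mul, mul_assoc, hFL, mul_assoc, hdL.eq, ← mul_assoc, hFL, hdh.eq, sub_self]
  have hT_h : (d * F - F * d) * h = 0 := by
    rw [sub_mul, mul_assoc, hFh, mul_assoc, hdh.eq, ← mul_assoc, hFh, mul_neg, neg_mul,
      hdL.eq, sub_self]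
  have hT : d * F - F * d = 0 := by
    calc d * F - F * d = (d * F - F * d) * L * F + (d * F - F * d) * h := by
          rw [mul_assoc _ L, hLF, ← mul_add, hvh, mul_one]
      _ = 0 := by rw [hT_L, hT_h, zero_mul, add_zero]
  exact sub_eq_zero.mp hT

theorem stmt13_general
    {V : Type*} [LieRing V] [LieAlgebra ℝ V]
    (L Γ F v h : Module.End ℝ V)
    (D : V →ₗ[ℝ] V →ₗ[ℝ] V)
    (hv : v = (1/2 : ℝ) • (1 - Γ)) (hh : h = (1/2 : ℝ) • (1 + Γ))
    (hFL : F * L = h) (hFh : F * h = -L) (hLF : L * F = v)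
    (hDL : ∀ X Y : V, D X (L Y) = L (D X Y)) :
    ((∀ X Y : V, D X (Γ Y) = Γ (D X Y)) ↔ (∀ X Y : V, D X (F Y) = F (D X Y))) ∧
    ((∀ X Y : V, D X (F Y) = F (D X Y)) ↔
      ((∀ X Y : V, D X (v Y) = v (D X Y)) ∧ (∀ X Y : V, D X (h Y) = h (D X Y)))) := by
  simp only [forall_apply_comm_iff_mem_centralizer] at hDL ⊢
  set S := Subalgebra.centralizer ℝ (Set.range D)
  have hΓ : Γ = h - v := by rw [hv, hh]; module
  have hvh : v + h = 1 := by rw [hv, hh]; module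
  have hΓ_F : Γ ∈ S → F ∈ S := by
    intro hΓS
    have hhS : h ∈ S := hh ▸ S.smul_mem (S.add_mem S.one_mem hΓS) _
    have hvS : v ∈ S := hv ▸ S.smul_mem (S.sub_mem S.one_mem hΓS) _
    rw [Subalgebra.mem_centralizer_iff] at hDL hhS ⊢
    intro d hd
    exact Commute.almostComplex_of_commute hvh hFL hFh hLF (hDL d hd) (hhS d hd)
  have hF_vh : F ∈ S → v ∈ S ∧ h ∈ S := fun hFS =>
    ⟨hLF ▸ S.mul_mem hDL hFS, hFL ▸ S.mul_mem hFS hDL⟩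
  have hvh_Γ : v ∈ S ∧ h ∈ S → Γ ∈ S := fun ⟨hvS, hhS⟩ => hΓ ▸ S.sub_mem hhS hvS
  exact ⟨⟨hΓ_F, fun hFS => hvh_Γ (hF_vh hFS)⟩, ⟨hF_vh, fun hc => hΓ_F (hvh_Γ hc)⟩⟩

/-- for an `L`-regular linear connection `D` inducing the
`L`-connection `Γ` with associated almost-complex structure `F`, the following are
equivalent: (a) `DΓ = 0`; (b) `DF = 0`; (c) `Dv = 0` and `Dh = 0`. -/
theorem stmt13
    {V : Type*} [LieRing V] [LieAlgebra ℝ V]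
    (L Γ F v h : Module.End ℝ V)
    (D : V →ₗ[ℝ] V →ₗ[ℝ] V)
    (hL2 : L * L = 0)
    (hIK : LinearMap.range L = LinearMap.ker L)
    (hLΓ : L * Γ = L) (hΓL : Γ * L = -L)
    (hv : v = (1/2 : ℝ) • (1 - Γ)) (hh : h = (1/2 : ℝ) • (1 + Γ))
    (hFL : F * L = h) (hFh : F * h = -L) (hLF : L * F = v)
    (hDL : ∀ X Y : V, D X (L Y) = L (D X Y)) :
    ((∀ X Y : V, D X (Γ Y) = Γ (D X Y)) ↔ (∀ X Y : V, D X (F Y) = F (D X Y))) ∧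
    ((∀ X Y : V, D X (F Y) = F (D X Y)) ↔
      ((∀ X Y : V, D X (v Y) = v (D X Y)) ∧ (∀ X Y : V, D X (h Y) = h (D X Y)))) :=
  stmt13_general L Γ F v h D hv hh hFL hFh hLF hDL
end

section
/- Let Γ be an L-connection with projectors v,h and associated almost-complex structure F, and B an L-semibasic vector 2-form with B°+[C,h]=0. The connection defined by D_X Y = h[LY,F]X + L[vY,F]X + F B(X,Y) + B(X,FY) (brackets denoting Frölicher–Nijenhuis brackets evaluated at X) satisfies D_{LX}(LY)=L[LX,Y] and D_{hX}(LY)=v[hX,LY]+B(X,Y) for all vector fields X,Y. -/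
/-- Frölicher–Nijenhuis bracket of two vector 1-forms, evaluated on vector fields. -/
def fnBracket {V : Type*} [LieRing V] [LieAlgebra ℝ V]
    (K K' : Module.End ℝ V) (X Y : V) : V :=
  ⁅K X, K' Y⁆ + ⁅K' X, K Y⁆ + K (K' ⁅X, Y⁆) + K' (K ⁅X, Y⁆)
    - K ⁅K' X, Y⁆ - K ⁅X, K' Y⁆ - K' ⁅K X, Y⁆ - K' ⁅X, K Y⁆

/-- Frölicher–Nijenhuis bracket `[Z,F]` of a vector field `Z` with a vector 1-form
`F`, evaluated on a vector field `X`. -/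
def fnBracketVF {V : Type*} [LieRing V] [LieAlgebra ℝ V]
    (Z : V) (F : Module.End ℝ V) (X : V) : V :=
  ⁅Z, F X⁆ - F ⁅Z, X⁆

/-!
With `L² = 0`, the condition `[L,L] = 0` says `[LX,LY] = L[LX,Y] + L[X,LY]`, so in particular
`L[LX,LY] = 0`. Every term of `D_{LX}(LY)` and `D_{hX}(LY)` then reduces by the algebraic
relations `FL = h`, `Fh = -L`, `LF = v`, `vL = L`, `h + v = 1`, while `B` drops out on vertical
arguments, which are the vectors in the image of `L` (among them every `vX = L(FX)`).
-/

theorem half_smul_one_sub_mul_of_mul_eq_neg {V : Type*} [AddCommGroup V] [Module ℝ V]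
    {Γ L : Module.End ℝ V} (hΓL : Γ * L = -L) : ((1 / 2 : ℝ) • (1 - Γ)) * L = L := by
  rw [smul_mul_assoc, sub_mul, hΓL, one_mul, sub_neg_eq_add, ← two_smul ℝ, smul_smul]
  norm_num

theorem half_smul_one_add_add_half_smul_one_sub {V : Type*} [AddCommGroup V] [Module ℝ V]
    (Γ : Module.End ℝ V) : (1 / 2 : ℝ) • (1 + Γ) + (1 / 2 : ℝ) • (1 - Γ) = 1 := by
  rw [← smul_add, add_add_sub_cancel, ← two_smul ℝ, smul_smul]
  norm_num

section

variable {V : Type*} [LieRing V] [LieAlgebra ℝ V]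

theorem fnBracket_self (K : Module.End ℝ V) (X Y : V) :
    fnBracket K K X Y = (2 : ℝ) • (⁅K X, K Y⁆ + K (K ⁅X, Y⁆) - K ⁅K X, Y⁆ - K ⁅X, K Y⁆) := by
  simp only [fnBracket, smul_sub, smul_add, two_smul]
  abel

variable {L : Module.End ℝ V}

theorem lie_apply_apply_eq_of_fnBracket_self_eq_zero (hL2 : L * L = 0) {X Y : V}
    (hLL : fnBracket L L X Y = 0) : ⁅L X, L Y⁆ = L ⁅L X, Y⁆ + L ⁅X, L Y⁆ := by
  rw [fnBracket_self, smul_eq_zero, ← Module.End.mul_apply, hL2, LinearMap.zero_apply,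
    add_zero, sub_sub, sub_eq_zero] at hLL
  exact hLL.resolve_left two_ne_zero

theorem apply_lie_apply_apply_eq_zero (hL2 : L * L = 0) {X Y : V}
    (hLL : fnBracket L L X Y = 0) : L ⁅L X, L Y⁆ = 0 := by
  simp only [lie_apply_apply_eq_of_fnBracket_self_eq_zero hL2 hLL, map_add,
    ← Module.End.mul_apply, hL2, LinearMap.zero_apply, add_zero]

def covDeriv (L F v h : Module.End ℝ V) (B : V →ₗ[ℝ] V →ₗ[ℝ] V) (X Y : V) : V :=
  h (fnBracketVF (L Y) F X) + L (fnBracketVF (v Y) F X) + F (B X Y) + B X (F Y)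

variable {L F v h : Module.End ℝ V} {B : V →ₗ[ℝ] V →ₗ[ℝ] V}

theorem covDeriv_vertical_vertical (hL2 : L * L = 0) (hLL : ∀ X Y : V, fnBracket L L X Y = 0)
    (hvL : v * L = L) (hhv : h + v = 1) (hFL : F * L = h) (hLF : L * F = v)
    (hB : ∀ X Y : V, X ∈ LinearMap.range L → B X Y = 0) (X Y : V) :
    covDeriv L F v h B (L X) (L Y) = L ⁅L X, Y⁆ := by
  have hLLY : L (L Y) = 0 := congr($hL2 Y)
  have hh : ∀ z, h z = z - v z := fun z => eq_sub_of_add_eq congr($hhv z)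
  have hvert : L ⁅L Y, v X⁆ = 0 := by
    rw [← congr($hLF X)]
    exact apply_lie_apply_apply_eq_zero hL2 (hLL Y (F X))
  have hv_bracket : v ⁅L Y, L X⁆ = L ⁅L Y, X⁆ + L ⁅Y, L X⁆ := by
    rw [lie_apply_apply_eq_of_fnBracket_self_eq_zero hL2 (hLL Y X), map_add]
    exact congr($hvL _ + $hvL _)
  have hvLY : v (L Y) = L Y := congr($hvL Y)
  have hFLX : F (L X) = h X := congr($hFL X)
  have hLF' : L (F ⁅L Y, L X⁆) = v ⁅L Y, L X⁆ := congr($hLF _)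
  simp only [covDeriv, fnBracketVF, hLLY, hB _ _ (LinearMap.mem_range_self L X), hvLY,
    hFLX, map_sub, hLF', hh X, lie_sub, hvert, hv_bracket, zero_lie, sub_self, map_zero]
  rw [← lie_skew (L X) Y, map_neg]
  abel

theorem covDeriv_horizontal_vertical (hL2 : L * L = 0) (hLL : ∀ X Y : V, fnBracket L L X Y = 0)
    (hvL : v * L = L) (hhv : h + v = 1) (hFL : F * L = h) (hFh : F * h = -L) (hLF : L * F = v)
    (hBalt : ∀ X Y : V, B X Y = -(B Y X))
    (hB : ∀ X Y : V, X ∈ LinearMap.range L → B X Y = 0) (X Y : V) :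
    covDeriv L F v h B (h X) (L Y) = v ⁅h X, L Y⁆ + B X Y := by
  have hLLY : L (L Y) = 0 := congr($hL2 Y)
  have hvLY : v (L Y) = L Y := congr($hvL Y)
  have hFLY : F (L Y) = h Y := congr($hFL Y)
  have hFhX : F (h X) = -(L X) := congr($hFh X)
  have hLF' : L (F ⁅L Y, h X⁆) = v ⁅L Y, h X⁆ := congr($hLF _)
  have hvert : L ⁅L Y, -(L X)⁆ = 0 := by
    rw [lie_neg, map_neg, apply_lie_apply_apply_eq_zero hL2 (hLL Y X), neg_zero]
  have hB_hL : B (h X) (L Y) = 0 := by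
    rw [hBalt, hB _ _ (LinearMap.mem_range_self L Y), neg_zero]
  have hB_hh : B (h X) (h Y) = B X Y := by
    have hBv : ∀ a b, B (v a) b = 0 := fun a b => hB _ _ ⟨F a, congr($hLF a)⟩
    have hh : ∀ z, h z = z - v z := fun z => eq_sub_of_add_eq congr($hhv z)
    have hBv' : ∀ a b, B a (v b) = 0 := fun a b => by rw [hBalt, hBv, neg_zero]
    rw [hh, hh]
    simp only [map_sub, LinearMap.sub_apply, hBv, hBv', sub_zero]
  simp only [covDeriv, fnBracketVF, hLLY, hvLY, hFLY, hFhX, map_sub, hLF', hvert, hB_hL, hB_hh,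
    zero_lie, sub_self, map_zero]
  rw [← lie_skew (h X) (L Y), map_neg]
  abel

end

theorem stmt15_general
    {V : Type*} [LieRing V] [LieAlgebra ℝ V]
    (L Γ F v h : Module.End ℝ V)
    (B : V →ₗ[ℝ] V →ₗ[ℝ] V)
    (hL2 : L * L = 0)
    (hLL : ∀ X Y : V, fnBracket L L X Y = 0)
    (hΓL : Γ * L = -L)
    (hv : v = (1/2 : ℝ) • (1 - Γ)) (hh : h = (1/2 : ℝ) • (1 + Γ))
    (hFL : F * L = h) (hFh : F * h = -L) (hLF : L * F = v)
    (hBalt : ∀ X Y : V, B X Y = -(B Y X))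
    (hBsb2 : ∀ X Y : V, X ∈ LinearMap.range L → B X Y = 0)
    (D : V → V → V)
    (hD : ∀ X Y : V, D X Y =
      h (fnBracketVF (L Y) F X) + L (fnBracketVF (v Y) F X) + F (B X Y) + B X (F Y)) :
    (∀ X Y : V, D (L X) (L Y) = L ⁅L X, Y⁆) ∧
    (∀ X Y : V, D (h X) (L Y) = v ⁅h X, L Y⁆ + B X Y) := by
  have hvL : v * L = L := hv ▸ half_smul_one_sub_mul_of_mul_eq_neg hΓL
  have hhv : h + v = 1 := hv ▸ hh ▸ half_smul_one_add_add_half_smul_one_sub Γ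
  obtain rfl : D = covDeriv L F v h B := funext fun X => funext (hD X)
  exact ⟨covDeriv_vertical_vertical hL2 hLL hvL hhv hFL hLF hBsb2,
    covDeriv_horizontal_vertical hL2 hLL hvL hhv hFL hFh hLF hBalt hBsb2⟩

/-- the connection
`D_X Y = h[LY,F]X + L[vY,F]X + F B(X,Y) + B(X,FY)` associated to an
`L`-connection `Γ` and an `L`-semibasic 2-form `B` with `B° + [C,h] = 0` satisfies
`D_{LX}(LY) = L[LX,Y]` and `D_{hX}(LY) = v[hX,LY] + B(X,Y)`. -/
theorem stmt15
    {V : Type*} [LieRing V] [LieAlgebra ℝ V]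
    (L Γ F v h : Module.End ℝ V) (C : V)
    (B : V →ₗ[ℝ] V →ₗ[ℝ] V)
    (hL2 : L * L = 0)
    (hLL : ∀ X Y : V, fnBracket L L X Y = 0)
    (hIK : LinearMap.range L = LinearMap.ker L)
    (hCL : ∀ X : V, ⁅C, L X⁆ - L ⁅C, X⁆ = -(L X))
    (hLΓ : L * Γ = L) (hΓL : Γ * L = -L)
    (hv : v = (1/2 : ℝ) • (1 - Γ)) (hh : h = (1/2 : ℝ) • (1 + Γ))
    (hFL : F * L = h) (hFh : F * h = -L) (hLF : L * F = v)
    (hBalt : ∀ X Y : V, B X Y = -(B Y X))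
    (hBsb1 : ∀ X Y : V, L (B X Y) = 0)
    (hBsb2 : ∀ X Y : V, X ∈ LinearMap.range L → B X Y = 0)
    (hBpot : ∀ S : V, L S = C → ∀ X : V, B S X + (⁅C, h X⁆ - h ⁅C, X⁆) = 0)
    (D : V → V → V)
    (hD : ∀ X Y : V, D X Y =
      h (fnBracketVF (L Y) F X) + L (fnBracketVF (v Y) F X) + F (B X Y) + B X (F Y)) :
    (∀ X Y : V, D (L X) (L Y) = L ⁅L X, Y⁆) ∧
    (∀ X Y : V, D (h X) (L Y) = v ⁅h X, L Y⁆ + B X Y) :=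
  stmt15_general L Γ F v h B hL2 hLL hΓL hv hh hFL hFh hLF hBalt hBsb2 D hD
end
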